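/- Let B be a band, let x₁, …, xₙ ∈ B and let y ∈ B satisfy y·x_i·y = y for all i ∈ [1,n] (i.e. y lies 𝒥-below every x_i). Then in IG(B): x̄₁⋯x̄ₙ·ȳ = z̄₁ z̄₂ ⋯ z̄ₙ·ȳ, where z_k = x_k x_{k+1}⋯xₙ·y·xₙ⋯x_{k+1} x_k for k ∈ [1,n]; and dually ȳ·x̄₁⋯x̄ₙ = ȳ·w̄₁ w̄₂ ⋯ w̄ₙ, where w_k = x_k⋯x₁·y·x₁⋯x_k for k ∈ [1,n]. -/

import Mathlib

/-! Common definitions: free idempotent generated semigroups over bands,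
generalised Green's relations, and abundancy notions. -/

/-- `(e, f)` is a *basic pair* if `ef ∈ {e,f}` or `fe ∈ {e,f}`. -/
def basicPair {B : Type*} [Mul B] (e f : B) : Prop :=
  e * f = e ∨ e * f = f ∨ f * e = e ∨ f * e = f

/-- The defining congruence of the free idempotent generated semigroup `IG B`:
the congruence on the free semigroup on `{ē : e ∈ B}` generated by the relations
`ē f̄ = (ef)‾` for basic pairs `(e, f)`. -/
def igCon (B : Type*) [Semigroup B] : Con (FreeSemigroup B) :=
  conGen fun w₁ w₂ => ∃ e f : B, basicPair e f ∧
    w₁ = FreeSemigroup.of e * FreeSemigroup.of f ∧ w₂ = FreeSemigroup.of (e * f)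

/-- The free idempotent generated semigroup over a band `B`. -/
abbrev IG (B : Type*) [Semigroup B] := (igCon B).Quotient

/-- The canonical generator `ē` of `IG B`. -/
def igOf {B : Type*} [Semigroup B] (e : B) : IG B :=
  ((FreeSemigroup.of e : FreeSemigroup B) : (igCon B).Quotient)

/-- `prodSeq x a b = x a * x (a+1) * ⋯ * x b` (it is `x a` when `b ≤ a`). -/
def prodSeq {M : Type*} [Mul M] (x : ℕ → M) (a b : ℕ) : M :=
  (List.range (b - a)).foldl (fun acc i => acc * x (a + i + 1)) (x a)

/-- The word `x̄_a x̄_{a+1} ⋯ x̄_b` in the free semigroup on `{ē : e ∈ B}`. -/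
def freeWord {B : Type*} (x : ℕ → B) (a b : ℕ) : FreeSemigroup B :=
  prodSeq (fun i => FreeSemigroup.of (x i)) a b

/-- The element `x̄_a x̄_{a+1} ⋯ x̄_b` of `IG B`. -/
def igWord {B : Type*} [Semigroup B] (x : ℕ → B) (a b : ℕ) : IG B :=
  ((freeWord x a b : FreeSemigroup B) : (igCon B).Quotient)

/-- Green's relation `𝓡`: `a 𝓡 b` iff `a = b` or `as = b`, `bt = a` for some `s, t`. -/
def GreenR {S : Type*} [Semigroup S] (a b : S) : Prop :=
  a = b ∨ ∃ s t : S, a * s = b ∧ b * t = a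

/-- Green's relation `𝓛`: `a 𝓛 b` iff `a = b` or `sa = b`, `tb = a` for some `s, t`. -/
def GreenL {S : Type*} [Semigroup S] (a b : S) : Prop :=
  a = b ∨ ∃ s t : S, s * a = b ∧ t * b = a

/-- `a 𝓡* b` iff for all `x, y ∈ S¹`, `xa = ya ↔ xb = yb`. -/
def RStar {S : Type*} [Semigroup S] (a b : S) : Prop :=
  ∀ x y : WithOne S,
    x * (a : WithOne S) = y * (a : WithOne S) ↔ x * (b : WithOne S) = y * (b : WithOne S)

/-- `a 𝓛* b` iff for all `x, y ∈ S¹`, `ax = ay ↔ bx = by`. -/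
def LStar {S : Type*} [Semigroup S] (a b : S) : Prop :=
  ∀ x y : WithOne S,
    (a : WithOne S) * x = (a : WithOne S) * y ↔ (b : WithOne S) * x = (b : WithOne S) * y

/-- `a 𝓡̃ b` iff for every idempotent `e`, `ea = a ↔ eb = b`. -/
def RTilde {S : Type*} [Semigroup S] (a b : S) : Prop :=
  ∀ e : S, IsIdempotentElem e → (e * a = a ↔ e * b = b)

/-- `a 𝓛̃ b` iff for every idempotent `e`, `ae = a ↔ be = b`. -/
def LTilde {S : Type*} [Semigroup S] (a b : S) : Prop :=
  ∀ e : S, IsIdempotentElem e → (a * e = a ↔ b * e = b)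

/-- A semigroup is *abundant* if every `𝓡*`-class and every `𝓛*`-class
contains an idempotent. -/
def Abundant (S : Type*) [Semigroup S] : Prop :=
  ∀ a : S, (∃ e : S, IsIdempotentElem e ∧ RStar a e) ∧
    (∃ e : S, IsIdempotentElem e ∧ LStar a e)

/-- A semigroup is *weakly abundant* if every `𝓡̃`-class and every `𝓛̃`-class
contains an idempotent. -/
def WeaklyAbundant (S : Type*) [Semigroup S] : Prop :=
  ∀ a : S, (∃ e : S, IsIdempotentElem e ∧ RTilde a e) ∧
    (∃ e : S, IsIdempotentElem e ∧ LTilde a e)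

/-- On a band, `x` and `y` are `𝒟`-equivalent iff `xyx = x` and `yxy = y`. -/
def dEquiv {B : Type*} [Mul B] (x y : B) : Prop :=
  x * y * x = x ∧ y * x * y = y

/-- On a band, `x` and `y` are `𝒥`-incomparable iff `xyx ≠ x` and `yxy ≠ y`. -/
def jIncomp {B : Type*} [Mul B] (x y : B) : Prop :=
  x * y * x ≠ x ∧ y * x * y ≠ y

/-- One step of the reduction system induced by the presentation of `IG B`:
replace a factor `ē f̄`, with `(e,f)` a basic pair, by `(ef)‾`. -/
def RedStep {B : Type*} [Semigroup B] (w w' : FreeSemigroup B) : Prop :=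
  ∃ (p q : List B) (e f : B), basicPair e f ∧
    w.head :: w.tail = p ++ e :: f :: q ∧
    w'.head :: w'.tail = p ++ (e * f) :: q

/-- A word is in *normal form* (irreducible) if no reduction step applies. -/
def IsNF {B : Type*} [Semigroup B] (w : FreeSemigroup B) : Prop :=
  ∀ w', ¬ RedStep w w'

/-- `x̄₁ ⋯ x̄ₙ` (letters `x 1, …, x n`) is in *almost normal form* witnessed by
block boundaries `idx 0 = 0 < idx 1 < ⋯ < idx r = n`: within each block all
letters are `𝒟`-equivalent, and letters in adjacent blocks are incomparable. -/
def AlmostNF {B : Type*} [Mul B] (x : ℕ → B) (n r : ℕ) (idx : ℕ → ℕ) : Prop :=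
  1 ≤ r ∧ idx 0 = 0 ∧ idx r = n ∧
  (∀ k < r, idx k < idx (k + 1)) ∧
  (∀ k < r, ∀ p q : ℕ, idx k < p → p ≤ idx (k + 1) → idx k < q → q ≤ idx (k + 1) →
    dEquiv (x p) (x q)) ∧
  (∀ k : ℕ, k + 1 < r → ∀ p q : ℕ, idx k < p → p ≤ idx (k + 1) →
    idx (k + 1) < q → q ≤ idx (k + 2) → jIncomp (x p) (x q))

/-- Condition (P) for `IG B`. -/
def CondP (B : Type*) [Semigroup B] : Prop :=
  ∀ (n m r : ℕ) (u v : ℕ → B) (iu iv : ℕ → ℕ),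
    AlmostNF u n r iu → AlmostNF v m r iv →
    igWord u 1 n = igWord v 1 m →
    ((∀ s : ℕ, 1 ≤ s → s ≤ r →
        (u (iu s) * v (iv s) = u (iu s) ∧ v (iv s) * u (iu s) = v (iv s)) →
        igWord u 1 (iu s) = igWord v 1 (iv s)) ∧
      (∀ t : ℕ, t + 1 ≤ r →
        (u (iu t + 1) * v (iv t + 1) = v (iv t + 1) ∧
          v (iv t + 1) * u (iu t + 1) = u (iu t + 1)) →
        igWord u (iu t + 1) n = igWord v (iv t + 1) m))

/-- A normal band is *pliant* if for every `𝒟`-class `D` there is `c ∈ D` with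
`u e u = c` for every `e ∈ D` and every `u` strictly `𝒥`-above `D`. -/
def Pliant (B : Type*) [Mul B] : Prop :=
  ∀ d : B, ∃ c : B, dEquiv c d ∧
    ∀ e u : B, dEquiv e d → (e * u * e = e ∧ u * e * u ≠ u) → u * e * u = c

/-! If `y ≼ t` then `ȳ` absorbs `t̄` against `(tyt)‾` on either side: the basic pairs
`(yt, y)` and `(t, yt)` give `t̄ ȳ = t̄ (yt)‾ ȳ = (tyt)‾ ȳ`, and dually.
Since `z_k = x_k z_{k+1} x_k` and `z_{k+1} ≼ x_k` (the elements `a` with `yay = y` form a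
subsemigroup of a band), the letters of `x̄₁ ⋯ x̄ₙ ȳ` can be replaced one at a time, from the
right, by `z̄ₙ, …, z̄₁`; the dual identity is the mirror image, working from the left with
`w_{k+1} = x_{k+1} w_k x_{k+1}`. -/

section Sandwich

variable {S : Type*} [Semigroup S]

theorem conj_mul_conj_of_sandwich {y a c d : S} (h : y * (d * a * c) * y = y) :
    c * y * d * a * (c * y * d) = c * y * d := by
  calc c * y * d * a * (c * y * d) = c * (y * (d * a * c) * y) * d := by simp only [mul_assoc]
    _ = c * y * d := by rw [h]

theorem sandwich_mul (hband : ∀ x : S, x * x = x) {y a b : S}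
    (ha : y * a * y = y) (hb : y * b * y = y) : y * (a * b) * y = y := by
  calc y * (a * b) * y = y * b * y * (a * b) * (y * a * y) := by rw [ha, hb]
    _ = y * ((b * y * a) * (b * y * a)) * y := by simp only [mul_assoc]
    _ = y * (b * y * a) * y := by rw [hband]
    _ = y * b * y * (a * y) := by simp only [mul_assoc]
    _ = y := by rw [hb, ← mul_assoc, ha]

end Sandwich

section ProdSeq

variable {M : Type*}

theorem prodSeq_of_le [Mul M] (f : ℕ → M) {a b : ℕ} (h : b ≤ a) : prodSeq f a b = f a := by
  rw [prodSeq, Nat.sub_eq_zero_of_le h, List.range_zero, List.foldl_nil]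

theorem prodSeq_self [Mul M] (f : ℕ → M) (a : ℕ) : prodSeq f a a = f a :=
  prodSeq_of_le f le_rfl

theorem prodSeq_succ_right [Mul M] (f : ℕ → M) {a b : ℕ} (h : a ≤ b) :
    prodSeq f a (b + 1) = prodSeq f a b * f (b + 1) := by
  rw [prodSeq, prodSeq, show b + 1 - a = b - a + 1 by omega, List.range_succ, List.foldl_append,
    List.foldl_cons, List.foldl_nil, show a + (b - a) + 1 = b + 1 by omega]

theorem prodSeq_succ_left [Semigroup M] (f : ℕ → M) {a b : ℕ} (h : a < b) :
    prodSeq f a b = f a * prodSeq f (a + 1) b := by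
  induction b, h using Nat.le_induction with
  | base => rw [prodSeq_succ_right f le_rfl, prodSeq_self, prodSeq_self]
  | succ b hab ih =>
    rw [prodSeq_succ_right f (by omega), ih, prodSeq_succ_right f hab, mul_assoc]

theorem prodSeq_shift [Mul M] (f : ℕ → M) (a b : ℕ) :
    prodSeq (fun i => f (i + 1)) a b = prodSeq f (a + 1) (b + 1) := by
  simp only [prodSeq, Nat.add_sub_add_right, add_right_comm]

theorem map_prodSeq {N : Type*} [Mul M] [Mul N] (φ : M →ₙ* N) (f : ℕ → M) (a b : ℕ) :
    φ (prodSeq f a b) = prodSeq (fun i => φ (f i)) a b := by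
  obtain hba | hab := lt_or_ge b a
  · rw [prodSeq_of_le f hba.le, prodSeq_of_le _ hba.le]
  induction b, hab using Nat.le_induction with
  | base => rw [prodSeq_self, prodSeq_self]
  | succ b hab ih => rw [prodSeq_succ_right f hab, prodSeq_succ_right _ hab, map_mul, ih]

variable [Semigroup M]

theorem sandwich_prodSeq (hband : ∀ x : M, x * x = x) {y : M} (f : ℕ → M) {a b : ℕ}
    (hab : a ≤ b) (hf : ∀ i, a ≤ i → i ≤ b → y * f i * y = y) : y * prodSeq f a b * y = y := by
  induction b, hab using Nat.le_induction with
  | base => rw [prodSeq_self]; exact hf a le_rfl le_rfl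
  | succ b hab ih =>
    rw [prodSeq_succ_right f hab]
    exact sandwich_mul hband (ih fun i hi hib => hf i hi (by omega)) (hf _ (by omega) le_rfl)

theorem mul_prodSeq_eq_of_mul_eq {u v : M} (f : ℕ → M) {a : ℕ} (b : ℕ)
    (h : u * f a = v * f a) : u * prodSeq f a b = v * prodSeq f a b := by
  rcases le_or_gt b a with hba | hab
  · rwa [prodSeq_of_le f hba]
  · rw [prodSeq_succ_left f hab, ← mul_assoc, ← mul_assoc, h]

theorem prodSeq_mul_eq_of_mul_eq {u v : M} (f : ℕ → M) {a b : ℕ} (hab : a ≤ b)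
    (h : f b * u = f b * v) : prodSeq f a b * u = prodSeq f a b * v := by
  rcases hab.eq_or_lt with rfl | hlt
  · rwa [prodSeq_self]
  · obtain ⟨c, rfl⟩ : ∃ c, b = c + 1 := ⟨b - 1, by omega⟩
    rw [prodSeq_succ_right f (by omega : a ≤ c), mul_assoc, mul_assoc, h]

theorem prodSeq_mul_eq_of_forall_mul_succ {s t : ℕ → M} {c : M} {a b : ℕ} (hab : a ≤ b)
    (hlast : s b * c = t b * c)
    (hstep : ∀ k, a ≤ k → k < b → s k * t (k + 1) = t k * t (k + 1)) :
    prodSeq s a b * c = prodSeq t a b * c := by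
  induction hab using Nat.decreasingInduction with
  | self => rwa [prodSeq_self, prodSeq_self]
  | of_succ a hlt ih =>
    rw [prodSeq_succ_left s hlt, prodSeq_succ_left t hlt, mul_assoc,
      ih fun k hk hkb => hstep k (by omega) hkb, ← mul_assoc,
      mul_prodSeq_eq_of_mul_eq t _ (hstep a le_rfl hlt)]

theorem mul_prodSeq_eq_of_forall_succ_mul {s t : ℕ → M} {c : M} {a b : ℕ} (hab : a ≤ b)
    (hfirst : c * s a = c * t a)
    (hstep : ∀ k, a ≤ k → k < b → t k * s (k + 1) = t k * t (k + 1)) :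
    c * prodSeq s a b = c * prodSeq t a b := by
  induction b, hab using Nat.le_induction with
  | base => rwa [prodSeq_self, prodSeq_self]
  | succ b hab ih =>
    rw [prodSeq_succ_right s hab, prodSeq_succ_right t hab, ← mul_assoc,
      ih fun k hk hkb => hstep k hk (by omega), mul_assoc,
      prodSeq_mul_eq_of_mul_eq t hab (hstep b hab (by omega))]

end ProdSeq

section IG

variable {B : Type*} [Semigroup B]

theorem igWord_eq_prodSeq (x : ℕ → B) (a b : ℕ) :
    igWord x a b = prodSeq (fun i => igOf (x i)) a b :=
  map_prodSeq (igCon B).mkMulHom _ a b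

theorem igOf_mul_igOf {e f : B} (h : basicPair e f) : igOf e * igOf f = igOf (e * f) :=
  (Con.eq _).mpr (ConGen.Rel.of _ _ ⟨e, f, h, rfl, rfl⟩)

theorem igOf_mul_igOf_eq_conj_mul {t y : B} (ht : t * t = t) (h : y * t * y = y) :
    igOf t * igOf y = igOf (t * y * t) * igOf y := by
  have hyt : igOf (y * t) * igOf y = igOf y := by rw [igOf_mul_igOf (Or.inr (Or.inl h)), h]
  calc igOf t * igOf y = igOf t * igOf (y * t) * igOf y := by rw [mul_assoc, hyt]
    _ = igOf (t * y * t) * igOf y := by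
      rw [igOf_mul_igOf (Or.inr (Or.inr (Or.inr (by rw [mul_assoc, ht])))), mul_assoc]

theorem igOf_mul_igOf_eq_mul_conj {t y : B} (ht : t * t = t) (h : y * t * y = y) :
    igOf y * igOf t = igOf y * igOf (t * y * t) := by
  have hyt : igOf y * igOf (t * y) = igOf y := by
    rw [igOf_mul_igOf (Or.inl (by rw [← mul_assoc, h])), ← mul_assoc, h]
  calc igOf y * igOf t = igOf y * (igOf (t * y) * igOf t) := by rw [← mul_assoc, hyt]
    _ = igOf y * igOf (t * y * t) := by
      rw [igOf_mul_igOf (Or.inr (Or.inr (Or.inl (by rw [← mul_assoc, ht]))))]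

end IG

section PushDown

variable {B : Type*} [Semigroup B]

/-- `z_k = (x_k ⋯ xₙ) y (xₙ ⋯ x_k)`. -/
def zSeq (x : ℕ → B) (y : B) (n k : ℕ) : B :=
  prodSeq x k n * y * prodSeq (fun i => x (n + k - i)) k n

/-- `w_k = (x_k ⋯ x₁) y (x₁ ⋯ x_k)`. -/
def wSeq (x : ℕ → B) (y : B) (k : ℕ) : B :=
  prodSeq (fun i => x (k + 1 - i)) 1 k * y * prodSeq x 1 k

theorem zSeq_self (x : ℕ → B) (y : B) (n : ℕ) : zSeq x y n n = x n * y * x n := by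
  simp only [zSeq, prodSeq_self, Nat.add_sub_cancel]

theorem zSeq_of_lt (x : ℕ → B) (y : B) {n k : ℕ} (hkn : k < n) :
    zSeq x y n k = x k * zSeq x y n (k + 1) * x k := by
  obtain ⟨m, rfl⟩ : ∃ m, n = m + 1 := ⟨n - 1, by omega⟩
  have hrev : prodSeq (fun i => x (m + 1 + k - i)) k (m + 1) =
      prodSeq (fun i => x (m + 1 + (k + 1) - i)) (k + 1) (m + 1) * x k := by
    rw [prodSeq_succ_right _ (by omega), ← prodSeq_shift, Nat.add_sub_cancel_left]
    congr 2
    funext i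
    congr 1
    omega
  rw [zSeq, zSeq, prodSeq_succ_left x hkn, hrev]
  simp only [mul_assoc]

theorem wSeq_one (x : ℕ → B) (y : B) : wSeq x y 1 = x 1 * y * x 1 := by
  simp only [wSeq, prodSeq_self]

theorem wSeq_succ (x : ℕ → B) (y : B) {k : ℕ} (hk : 1 ≤ k) :
    wSeq x y (k + 1) = x (k + 1) * wSeq x y k * x (k + 1) := by
  have hrev : prodSeq (fun i => x (k + 1 + 1 - i)) 1 (k + 1) =
      x (k + 1) * prodSeq (fun i => x (k + 1 - i)) 1 k := by
    rw [prodSeq_succ_left _ (by omega), ← prodSeq_shift]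
    simp only [Nat.add_sub_cancel, Nat.add_sub_add_right]
  rw [wSeq, wSeq, hrev, prodSeq_succ_right x hk]
  simp only [mul_assoc]

variable (hband : ∀ x : B, x * x = x) {x : ℕ → B} {y : B} {n : ℕ}
  (hy : ∀ i, 1 ≤ i → i ≤ n → y * x i * y = y)
include hband hy

theorem zSeq_succ_mul_mul_zSeq_succ {k : ℕ} (hk : 1 ≤ k) (hkn : k < n) :
    zSeq x y n (k + 1) * x k * zSeq x y n (k + 1) = zSeq x y n (k + 1) := by
  have hrev := sandwich_prodSeq hband (fun i => x (n + (k + 1) - i)) (by omega : k + 1 ≤ n)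
    fun i hi hin => hy _ (by omega) (by omega)
  have hfwd := sandwich_prodSeq hband x (by omega : k + 1 ≤ n) fun i hi hin => hy i (by omega) hin
  exact conj_mul_conj_of_sandwich
    (sandwich_mul hband (sandwich_mul hband hrev (hy k hk hkn.le)) hfwd)

theorem wSeq_mul_mul_wSeq {k : ℕ} (hk : 1 ≤ k) (hkn : k < n) :
    wSeq x y k * x (k + 1) * wSeq x y k = wSeq x y k := by
  have hfwd := sandwich_prodSeq hband x hk fun i hi hik => hy i hi (by omega)
  have hrev := sandwich_prodSeq hband (fun i => x (k + 1 - i)) hk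
    fun i hi hik => hy _ (by omega) (by omega)
  exact conj_mul_conj_of_sandwich
    (sandwich_mul hband (sandwich_mul hband hfwd (hy (k + 1) (by omega) hkn)) hrev)

end PushDown

/-- Let `B` be a band, `x₁, …, xₙ ∈ B` and `y ∈ B` with
`y xᵢ y = y` for all `i ∈ [1,n]`. Then in `IG B`:
`x̄₁ ⋯ x̄ₙ ȳ = z̄₁ ⋯ z̄ₙ ȳ` where `z_k = (x_k ⋯ xₙ) y (xₙ ⋯ x_k)`, and dually
`ȳ x̄₁ ⋯ x̄ₙ = ȳ w̄₁ ⋯ w̄ₙ` where `w_k = (x_k ⋯ x₁) y (x₁ ⋯ x_k)`. -/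
theorem IG_band_push_down
    {B : Type*} [Semigroup B] (hband : ∀ x : B, x * x = x)
    (n : ℕ) (hn : 1 ≤ n) (x : ℕ → B) (y : B)
    (hy : ∀ i : ℕ, 1 ≤ i → i ≤ n → y * x i * y = y) :
    igWord x 1 n * igOf y =
      igWord (fun k => prodSeq x k n * y * prodSeq (fun i => x (n + k - i)) k n) 1 n
        * igOf y ∧
    igOf y * igWord x 1 n =
      igOf y *
        igWord (fun k => prodSeq (fun i => x (k + 1 - i)) 1 k * y * prodSeq x 1 k) 1 n := by
  refine ⟨?_, ?_⟩
  · change igWord x 1 n * igOf y = igWord (zSeq x y n) 1 n * igOf y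
    simp only [igWord_eq_prodSeq]
    refine prodSeq_mul_eq_of_forall_mul_succ hn ?_ fun k hk hkn => ?_
    · rw [zSeq_self]
      exact igOf_mul_igOf_eq_conj_mul (hband _) (hy n hn le_rfl)
    · rw [igOf_mul_igOf_eq_conj_mul (hband _) (zSeq_succ_mul_mul_zSeq_succ hband hy hk hkn),
        ← zSeq_of_lt x y hkn]
  · change igOf y * igWord x 1 n = igOf y * igWord (wSeq x y) 1 n
    simp only [igWord_eq_prodSeq]
    refine mul_prodSeq_eq_of_forall_succ_mul hn ?_ fun k hk hkn => ?_
    · rw [wSeq_one]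
      exact igOf_mul_igOf_eq_mul_conj (hband _) (hy 1 le_rfl hn)
    · rw [igOf_mul_igOf_eq_mul_conj (hband _) (wSeq_mul_mul_wSeq hband hy hk hkn),
        ← wSeq_succ x y hk]
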